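/- arXiv:2010.07799 — 4 statements merged into one kernel-verified Lean document; each statement's English description precedes it below -/
import Mathlib

section
/- For any nonnegative real numbers a_1, ..., a_T, we have sqrt(sum_{t=1}^T a_t) ≤ sum_{t=1}^T a_t / sqrt(sum_{s=1}^t a_s) ≤ 2 * sqrt(sum_{t=1}^T a_t), where terms with zero denominator are interpreted as zero. -/
/-!
With `S t = a 0 + ⋯ + a (t - 1)`, the `t`-th term is `(S (t+1) - S t) / √(S (t+1))`, and for
`0 ≤ x ≤ y` one has `√y - √x ≤ (y - x) / √y ≤ 2 (√y - √x)` because `y - x = (√y - √x)(√y + √x)`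
and `√y ≤ √y + √x ≤ 2 √y`. Summing over `t`, the outer bounds telescope to `√(S T)` and `2 √(S T)`.
-/

open Finset Real

section SqrtIncrement

variable {x y : ℝ}

lemma sqrt_sub_sqrt_le_div_sqrt (hx : 0 ≤ x) (hxy : x ≤ y) : √y - √x ≤ (y - x) / √y := by
  have hsqrt : √x ≤ √y := sqrt_le_sqrt hxy
  rcases (sqrt_nonneg y).eq_or_lt with hy | hy
  · rw [← hy] at hsqrt ⊢
    simp [le_antisymm hsqrt (sqrt_nonneg x)]
  · rw [le_div_iff₀ hy]
    nlinarith [sq_sqrt hx, sq_sqrt (hx.trans hxy), sqrt_nonneg x]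

lemma div_sqrt_le_two_mul_sqrt_sub_sqrt (hx : 0 ≤ x) (hxy : x ≤ y) :
    (y - x) / √y ≤ 2 * (√y - √x) := by
  have hsqrt : √x ≤ √y := sqrt_le_sqrt hxy
  rcases (sqrt_nonneg y).eq_or_lt with hy | hy
  · rw [← hy] at hsqrt ⊢
    simp [le_antisymm hsqrt (sqrt_nonneg x)]
  · rw [div_le_iff₀ hy]
    nlinarith [sq_sqrt hx, sq_sqrt (hx.trans hxy)]

end SqrtIncrement

section PartialSums

variable {a : ℕ → ℝ}

lemma sum_range_sqrt_partialSum_sub (T : ℕ) :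
    ∑ t ∈ range T, (√(∑ s ∈ range (t + 1), a s) - √(∑ s ∈ range t, a s)) =
      √(∑ t ∈ range T, a t) := by
  rw [sum_range_sub (fun t => √(∑ s ∈ range t, a s))]
  simp

lemma sqrt_sum_le_sum_div_sqrt_partialSum (ha : ∀ t, 0 ≤ a t) (T : ℕ) :
    √(∑ t ∈ range T, a t) ≤ ∑ t ∈ range T, a t / √(∑ s ∈ range (t + 1), a s) := by
  rw [← sum_range_sqrt_partialSum_sub]
  refine sum_le_sum fun t _ => ?_
  simpa [sum_range_succ] using
    sqrt_sub_sqrt_le_div_sqrt (sum_nonneg fun s _ => ha s) (le_add_of_nonneg_right (ha t))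

lemma sum_div_sqrt_partialSum_le_two_mul_sqrt_sum (ha : ∀ t, 0 ≤ a t) (T : ℕ) :
    ∑ t ∈ range T, a t / √(∑ s ∈ range (t + 1), a s) ≤ 2 * √(∑ t ∈ range T, a t) := by
  rw [← sum_range_sqrt_partialSum_sub, mul_sum]
  refine sum_le_sum fun t _ => ?_
  simpa [sum_range_succ] using
    div_sqrt_le_two_mul_sqrt_sub_sqrt (sum_nonneg fun s _ => ha s) (le_add_of_nonneg_right (ha t))

end PartialSums

theorem stmt_0_general (T : ℕ) (a : ℕ → ℝ) (ha : ∀ t, 0 ≤ a t) :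
    Real.sqrt (∑ t ∈ Finset.range T, a t) ≤
      (∑ t ∈ Finset.range T, a t / Real.sqrt (∑ s ∈ Finset.range (t + 1), a s)) ∧
    (∑ t ∈ Finset.range T, a t / Real.sqrt (∑ s ∈ Finset.range (t + 1), a s)) ≤
      2 * Real.sqrt (∑ t ∈ Finset.range T, a t) :=
  ⟨sqrt_sum_le_sum_div_sqrt_partialSum ha T, sum_div_sqrt_partialSum_le_two_mul_sqrt_sum ha T⟩

/-- For any nonnegative reals `a 0, …, a (T-1)` (representing `a_1, …, a_T`),
`sqrt (∑ a_t) ≤ ∑_t a_t / sqrt (∑_{s ≤ t} a_s) ≤ 2 * sqrt (∑ a_t)`,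
where terms with zero denominator are interpreted as zero (Lean's division by
zero convention). -/
theorem stmt_0 (T : ℕ) (hT : 0 < T) (a : ℕ → ℝ) (ha : ∀ t, 0 ≤ a t) :
    Real.sqrt (∑ t ∈ Finset.range T, a t) ≤
      (∑ t ∈ Finset.range T, a t / Real.sqrt (∑ s ∈ Finset.range (t + 1), a s)) ∧
    (∑ t ∈ Finset.range T, a t / Real.sqrt (∑ s ∈ Finset.range (t + 1), a s)) ≤
      2 * Real.sqrt (∑ t ∈ Finset.range T, a t) :=
  stmt_0_general T a ha
end

section
/- Let a_1, ..., a_T be nonnegative scalars each at most a, and let a_0 ≥ 0. Then sqrt(a_0 + sum_{t=1}^{T-1} a_t) - sqrt(a_0) ≤ sum_{t=1}^T a_t / sqrt(a_0 + sum_{s=1}^{t-1} a_s) ≤ 2a/sqrt(a_0) + 3*sqrt(a) + 3*sqrt(a_0 + sum_{t=1}^{T-1} a_t). -/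
/-!
Write `S t = a0 + a 0 + ⋯ + a (t - 1)`, so that the `t`-th summand is `a t / √(S t)` and
`S (t + 1) = S t + a t`. Since `√(x + y) - √x = y / (√(x + y) + √x)`, each summand dominates
the increment `√(S (t + 1)) - √(S t)`, and telescoping gives the lower bound. Conversely, once
`S t > A ≥ a t` the denominator `√(x + y) + √x` is at most `3 √x`, so the summand is at most
three increments; the summands with `S t ≤ A` have `∑ a t ≤ 2 A` and `√(S t) ≥ √a0`, and the
last summand is handled alone because its increment involves `S T`, which the bound does not
mention.
-/

open Finset Real

namespace Real

theorem sqrt_add_sub_sqrt_le_div {x y : ℝ} (hx : 0 < x) (hy : 0 ≤ y) :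
    √(x + y) - √x ≤ y / √x := by
  have hsx : 0 < √x := sqrt_pos.2 hx
  have hmono : √x ≤ √(x + y) := sqrt_le_sqrt (by linarith)
  rw [le_div_iff₀ hsx]
  nlinarith [sq_sqrt hx.le, sq_sqrt (by linarith : 0 ≤ x + y)]

theorem div_sqrt_le_three_mul_sqrt_add_sub_sqrt {x y : ℝ} (hx : 0 < x) (hy : 0 ≤ y)
    (hyx : y ≤ 3 * x) : y / √x ≤ 3 * (√(x + y) - √x) := by
  have hsx : 0 < √x := sqrt_pos.2 hx
  have hmono : √x ≤ √(x + y) := sqrt_le_sqrt (by linarith)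
  have htwice : √(x + y) ≤ 2 * √x := by
    rw [show 2 * √x = √(4 * x) by rw [sqrt_mul' _ hx.le]; norm_num]
    exact sqrt_le_sqrt (by linarith)
  rw [div_le_iff₀ hsx]
  nlinarith [sq_sqrt hx.le, sq_sqrt (by linarith : 0 ≤ x + y),
    mul_nonneg (sub_nonneg.2 hmono) (sub_nonneg.2 htwice)]

end Real

def cumSum (a0 : ℝ) (a : ℕ → ℝ) (t : ℕ) : ℝ := a0 + ∑ s ∈ range t, a s

section cumSum

variable {A a0 : ℝ} {a : ℕ → ℝ}

@[simp]
theorem cumSum_zero : cumSum a0 a 0 = a0 := by simp [cumSum]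

theorem cumSum_succ (t : ℕ) : cumSum a0 a (t + 1) = cumSum a0 a t + a t := by
  simp only [cumSum, sum_range_succ, add_assoc]

theorem le_cumSum (ha : ∀ t, 0 ≤ a t) (t : ℕ) : a0 ≤ cumSum a0 a t :=
  le_add_of_nonneg_right (sum_nonneg fun s _ => ha s)

theorem cumSum_pos (ha0 : 0 < a0) (ha : ∀ t, 0 ≤ a t) (t : ℕ) : 0 < cumSum a0 a t :=
  ha0.trans_le (le_cumSum ha t)

theorem sqrt_cumSum_sub_sqrt_le (ha0 : 0 < a0) (ha : ∀ t, 0 ≤ a t) (n : ℕ) :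
    √(cumSum a0 a n) - √a0 ≤ ∑ t ∈ range n, a t / √(cumSum a0 a t) := by
  calc √(cumSum a0 a n) - √a0
        = ∑ t ∈ range n, (√(cumSum a0 a (t + 1)) - √(cumSum a0 a t)) := by
        rw [sum_range_sub (fun t => √(cumSum a0 a t)), cumSum_zero]
    _ ≤ ∑ t ∈ range n, a t / √(cumSum a0 a t) := sum_le_sum fun t _ => by
        rw [cumSum_succ]
        exact sqrt_add_sub_sqrt_le_div (cumSum_pos ha0 ha t) (ha t)

/-- Since `cumSum` is monotone, all indices of the filter lie below its largest one `k`, and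
`cumSum a0 a (k + 1) = cumSum a0 a k + a k ≤ 2 A`. -/
theorem sum_filter_cumSum_le (ha0 : 0 ≤ a0) (ha : ∀ t, 0 ≤ a t ∧ a t ≤ A) (n : ℕ) :
    ∑ t ∈ (range n).filter (fun t => cumSum a0 a t ≤ A), a t ≤ 2 * A := by
  set F := (range n).filter (fun t => cumSum a0 a t ≤ A)
  rcases F.eq_empty_or_nonempty with hF | hF
  · rw [hF, sum_empty]
    linarith [(ha 0).1.trans (ha 0).2]
  have hk : cumSum a0 a (F.max' hF) ≤ A := (mem_filter.1 (F.max'_mem hF)).2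
  have hsub : F ⊆ range (F.max' hF + 1) := fun t ht =>
    mem_range.2 (Nat.lt_succ_of_le (F.le_max' t ht))
  calc ∑ t ∈ F, a t ≤ ∑ t ∈ range (F.max' hF + 1), a t :=
        sum_le_sum_of_subset_of_nonneg hsub fun t _ _ => (ha t).1
    _ = cumSum a0 a (F.max' hF) + a (F.max' hF) - a0 := by
        rw [← cumSum_succ, cumSum]; ring
    _ ≤ 2 * A := by linarith [(ha (F.max' hF)).2]

theorem div_sqrt_cumSum_le_div_sqrt (ha0 : 0 < a0) (ha : ∀ t, 0 ≤ a t) (t : ℕ) :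
    a t / √(cumSum a0 a t) ≤ a t / √a0 :=
  div_le_div_of_nonneg_left (ha t) (sqrt_pos.2 ha0) (sqrt_le_sqrt (le_cumSum ha t))

theorem div_sqrt_cumSum_le_sqrt (ha : ∀ t, 0 ≤ a t ∧ a t ≤ A) {t : ℕ}
    (hA : A < cumSum a0 a t) : a t / √(cumSum a0 a t) ≤ √A := by
  have hpos : 0 < cumSum a0 a t := (ha t).1.trans_lt ((ha t).2.trans_lt hA)
  rw [div_le_iff₀ (sqrt_pos.2 hpos)]
  calc a t ≤ A := (ha t).2
    _ = √A * √A := (mul_self_sqrt ((ha t).1.trans (ha t).2)).symm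
    _ ≤ √A * √(cumSum a0 a t) := by gcongr

theorem div_sqrt_cumSum_le_three_mul (ha : ∀ t, 0 ≤ a t ∧ a t ≤ A) {t : ℕ}
    (hA : A < cumSum a0 a t) :
    a t / √(cumSum a0 a t) ≤ 3 * (√(cumSum a0 a (t + 1)) - √(cumSum a0 a t)) := by
  have hpos : 0 < cumSum a0 a t := (ha t).1.trans_lt ((ha t).2.trans_lt hA)
  rw [cumSum_succ]
  exact div_sqrt_le_three_mul_sqrt_add_sub_sqrt hpos (ha t).1 (by linarith [(ha t).2])

theorem sum_div_sqrt_cumSum_le (ha0 : 0 < a0) (ha : ∀ t, 0 ≤ a t ∧ a t ≤ A) (n : ℕ) :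
    ∑ t ∈ range (n + 1), a t / √(cumSum a0 a t) ≤
      2 * A / √a0 + √A + 3 * (√(cumSum a0 a n) - √a0) := by
  set g : ℕ → ℝ := fun t => if cumSum a0 a t ≤ A then a t else 0
  have hnonneg : ∀ t, 0 ≤ a t := fun t => (ha t).1
  have hmono : ∀ t, √(cumSum a0 a t) ≤ √(cumSum a0 a (t + 1)) := fun t =>
    sqrt_le_sqrt (by rw [cumSum_succ]; linarith [hnonneg t])
  have hterm : ∀ t, a t / √(cumSum a0 a t) ≤
      g t / √a0 + 3 * (√(cumSum a0 a (t + 1)) - √(cumSum a0 a t)) := fun t => by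
    by_cases hA : cumSum a0 a t ≤ A
    · simp only [g, if_pos hA]
      linarith [div_sqrt_cumSum_le_div_sqrt ha0 hnonneg t, hmono t]
    · simp only [g, if_neg hA, zero_div, zero_add]
      exact div_sqrt_cumSum_le_three_mul ha (not_le.1 hA)
  have hlast : a n / √(cumSum a0 a n) ≤ g n / √a0 + √A := by
    by_cases hA : cumSum a0 a n ≤ A
    · simp only [g, if_pos hA]
      linarith [div_sqrt_cumSum_le_div_sqrt ha0 hnonneg n, sqrt_nonneg A]
    · simp only [g, if_neg hA, zero_div, zero_add]
      exact div_sqrt_cumSum_le_sqrt ha (not_le.1 hA)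
  have hlow : ∑ t ∈ range (n + 1), g t ≤ 2 * A := by
    simpa only [g, sum_filter] using sum_filter_cumSum_le ha0.le ha (n + 1)
  calc ∑ t ∈ range (n + 1), a t / √(cumSum a0 a t)
      ≤ ∑ t ∈ range n, (g t / √a0 + 3 * (√(cumSum a0 a (t + 1)) - √(cumSum a0 a t)))
          + (g n / √a0 + √A) := by
        rw [sum_range_succ]
        exact add_le_add (sum_le_sum fun t _ => hterm t) hlast
    _ = (∑ t ∈ range (n + 1), g t) / √a0 + √A + 3 * (√(cumSum a0 a n) - √a0) := by
        rw [sum_add_distrib, ← mul_sum, sum_range_sub (fun t => √(cumSum a0 a t)),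
          ← sum_div, sum_range_succ, cumSum_zero]
        ring
    _ ≤ 2 * A / √a0 + √A + 3 * (√(cumSum a0 a n) - √a0) := by
        gcongr

end cumSum

/-- `a 0, …, a (T-1)` represent `a_1, …, a_T`. -/
theorem stmt_1_general (T : ℕ) (A a0 : ℝ) (ha0 : 0 < a0)
    (a : ℕ → ℝ) (ha : ∀ t, 0 ≤ a t ∧ a t ≤ A) :
    Real.sqrt (a0 + ∑ t ∈ Finset.range (T - 1), a t) - Real.sqrt a0 ≤
      (∑ t ∈ Finset.range T, a t / Real.sqrt (a0 + ∑ s ∈ Finset.range t, a s)) ∧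
    (∑ t ∈ Finset.range T, a t / Real.sqrt (a0 + ∑ s ∈ Finset.range t, a s)) ≤
      2 * A / Real.sqrt a0 + 3 * Real.sqrt A +
        3 * Real.sqrt (a0 + ∑ t ∈ Finset.range (T - 1), a t) := by
  have hnonneg : ∀ t, 0 ≤ a t := fun t => (ha t).1
  change √(cumSum a0 a (T - 1)) - √a0 ≤ ∑ t ∈ range T, a t / √(cumSum a0 a t) ∧
    ∑ t ∈ range T, a t / √(cumSum a0 a t) ≤
      2 * A / √a0 + 3 * √A + 3 * √(cumSum a0 a (T - 1))
  constructor
  · calc √(cumSum a0 a (T - 1)) - √a0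
        ≤ ∑ t ∈ range (T - 1), a t / √(cumSum a0 a t) :=
          sqrt_cumSum_sub_sqrt_le ha0 hnonneg _
      _ ≤ ∑ t ∈ range T, a t / √(cumSum a0 a t) :=
          sum_le_sum_of_subset_of_nonneg (range_subset_range.2 (Nat.sub_le T 1))
            fun t _ _ => div_nonneg (hnonneg t) (sqrt_nonneg _)
  · rcases T with _ | n
    · simp only [range_zero, sum_empty]
      have hA : 0 ≤ A := (ha 0).1.trans (ha 0).2
      positivity
    · have := sum_div_sqrt_cumSum_le ha0 ha n
      rw [Nat.add_sub_cancel]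
      linarith [sqrt_nonneg A, sqrt_nonneg a0]

/-- Off-by-one AdaGrad-type inequality (Lemma from Bach–Levy).  `a 0, …, a (T-1)`
represent `a_1, …, a_T ∈ [0, A]`, and `a0 > 0`. -/
theorem stmt_1 (T : ℕ) (hT : 0 < T) (A a0 : ℝ) (hA : 0 < A) (ha0 : 0 < a0)
    (a : ℕ → ℝ) (ha : ∀ t, 0 ≤ a t ∧ a t ≤ A) :
    Real.sqrt (a0 + ∑ t ∈ Finset.range (T - 1), a t) - Real.sqrt a0 ≤
      (∑ t ∈ Finset.range T, a t / Real.sqrt (a0 + ∑ s ∈ Finset.range t, a s)) ∧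
    (∑ t ∈ Finset.range T, a t / Real.sqrt (a0 + ∑ s ∈ Finset.range t, a s)) ≤
      2 * A / Real.sqrt a0 + 3 * Real.sqrt A +
        3 * Real.sqrt (a0 + ∑ t ∈ Finset.range (T - 1), a t) :=
  stmt_1_general T A a0 ha0 a ha
end

section
/- Let d_1², ..., d_T² and R² > 0 be nonnegative scalars with d_t² ≤ R² for all t, let D_0 > 0, and define D_t² = D_{t−1}²(1 + d_t²/R²). Then for any 1 ≤ a ≤ b ≤ T: (i) sum_{t=a}^b D_{t−1}·d_t² ≥ 2R²(D_b − D_{a−1}); (ii) sum_{t=a}^b D_{t−1}·d_t² ≤ (√2 + 1)·R²·(D_b − D_{a−1}); (iii) sum_{t=a}^b d_t² ≤ 4R²·ln(D_b/D_{a−1}). -/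
/-!
With `x = d_t² / R²` and `u = √(1 + x)` we have `D_t - D_{t-1} = D_{t-1} (u - 1)` and
`D_{t-1} d_t² = D_{t-1} R² (u - 1)(u + 1)`. Since `1 ≤ u ≤ √2`, the factor `u + 1` lies in
`[2, √2 + 1]`, which gives (i) and (ii) one step at a time; (iii) follows stepwise from
`x ≤ 2 log (1 + x)` on `[0, 1]`. Each bound then telescopes.
-/

open Finset Real

lemma Finset.sum_Icc_add_one_left {M : Type*} [AddCommMonoid M] (f : ℕ → M) (a b : ℕ) :
    ∑ t ∈ Icc (a + 1) b, f t = ∑ s ∈ Ico a b, f (s + 1) := by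
  rw [← Ico_add_one_right_eq_Icc, sum_Ico_add']

section Step

variable {R D d : ℝ}

lemma eq_mul_sq_sqrt_one_add_div_sub_one (hR : 0 < R) (hd : 0 ≤ d) :
    d = R * (√(1 + d / R) ^ 2 - 1) := by
  rw [sq_sqrt (by positivity)]
  field_simp
  ring

lemma two_mul_mul_sqrt_one_add_div_sub_le (hR : 0 < R) (hD : 0 ≤ D) (hd : 0 ≤ d) :
    2 * R * (D * √(1 + d / R) - D) ≤ D * d := by
  have hx : 0 ≤ d / R := div_nonneg hd hR.le
  have hd_eq := eq_mul_sq_sqrt_one_add_div_sub_one hR hd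
  set u := √(1 + d / R)
  have hu : 1 ≤ u := one_le_sqrt.mpr (by linarith)
  rw [hd_eq]
  nlinarith [mul_nonneg (mul_nonneg hD hR.le) (mul_nonneg (sub_nonneg.mpr hu) (sub_nonneg.mpr hu))]

lemma mul_le_sqrt_two_add_one_mul_mul_sqrt_one_add_div_sub (hR : 0 < R) (hD : 0 ≤ D)
    (hd₀ : 0 ≤ d) (hd₁ : d ≤ R) :
    D * d ≤ (√2 + 1) * R * (D * √(1 + d / R) - D) := by
  have hx₀ : 0 ≤ d / R := div_nonneg hd₀ hR.le
  have hx₁ : d / R ≤ 1 := (div_le_one hR).mpr hd₁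
  have hd_eq := eq_mul_sq_sqrt_one_add_div_sub_one hR hd₀
  set u := √(1 + d / R)
  have hu₁ : 1 ≤ u := one_le_sqrt.mpr (by linarith)
  have hu₂ : u ≤ √2 := sqrt_le_sqrt (by linarith)
  rw [hd_eq]
  nlinarith [mul_nonneg (mul_nonneg hD hR.le)
    (mul_nonneg (sub_nonneg.mpr hu₁) (sub_nonneg.mpr hu₂))]

lemma le_two_mul_log_one_add {x : ℝ} (hx₀ : 0 ≤ x) (hx₁ : x ≤ 1) :
    x ≤ 2 * log (1 + x) := by
  have h := le_log_one_add_of_nonneg hx₀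
  rw [div_le_iff₀ (by linarith)] at h
  nlinarith

lemma le_four_mul_log_mul_sqrt_one_add_div_sub (hR : 0 < R) (hD : 0 < D) (hd₀ : 0 ≤ d)
    (hd₁ : d ≤ R) : d ≤ 4 * R * (log (D * √(1 + d / R)) - log D) := by
  have hx₀ : 0 ≤ d / R := div_nonneg hd₀ hR.le
  have hx₁ : d / R ≤ 1 := (div_le_one hR).mpr hd₁
  rw [log_mul hD.ne' (by positivity), log_sqrt (by linarith), add_sub_cancel_left]
  have h := mul_le_mul_of_nonneg_left (le_two_mul_log_one_add hx₀ hx₁) hR.le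
  rw [mul_div_cancel₀ d hR.ne'] at h
  linarith

end Step

theorem stmt_14_general (Rsq : ℝ) (hRsq : 0 < Rsq)
    (ds : ℕ → ℝ) (hds : ∀ t, 0 ≤ ds t ∧ ds t ≤ Rsq)
    (D : ℕ → ℝ) (hD0 : 0 < D 0)
    (hDrec : ∀ t, D (t + 1) = D t * Real.sqrt (1 + ds (t + 1) / Rsq))
    (a b : ℕ) (ha : 1 ≤ a) (hab : a ≤ b) :
    (∑ t ∈ Finset.Icc a b, D (t - 1) * ds t ≥ 2 * Rsq * (D b - D (a - 1))) ∧
    (∑ t ∈ Finset.Icc a b, D (t - 1) * ds t ≤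
      (Real.sqrt 2 + 1) * Rsq * (D b - D (a - 1))) ∧
    (∑ t ∈ Finset.Icc a b, ds t ≤ 4 * Rsq * Real.log (D b / D (a - 1))) := by
  have hDpos : ∀ t, 0 < D t := fun t => by
    induction t with
    | zero => exact hD0
    | succ t ih =>
      rw [hDrec]
      exact mul_pos ih (sqrt_pos.mpr (by have := (hds (t + 1)).1; positivity))
  obtain ⟨m, rfl⟩ := Nat.exists_eq_add_of_le' ha
  have hmb : m ≤ b := by omega
  simp only [sum_Icc_add_one_left, Nat.add_sub_cancel]
  refine ⟨?_, ?_, ?_⟩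
  · calc 2 * Rsq * (D b - D m) = ∑ s ∈ Ico m b, 2 * Rsq * (D (s + 1) - D s) := by
          rw [← mul_sum, sum_Ico_sub D hmb]
      _ ≤ ∑ s ∈ Ico m b, D s * ds (s + 1) := sum_le_sum fun s _ => by
          rw [hDrec]
          exact two_mul_mul_sqrt_one_add_div_sub_le hRsq (hDpos s).le (hds _).1
  · calc ∑ s ∈ Ico m b, D s * ds (s + 1)
        ≤ ∑ s ∈ Ico m b, (√2 + 1) * Rsq * (D (s + 1) - D s) := sum_le_sum fun s _ => by
          rw [hDrec]
          exact mul_le_sqrt_two_add_one_mul_mul_sqrt_one_add_div_sub hRsq (hDpos s).le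
            (hds _).1 (hds _).2
      _ = (√2 + 1) * Rsq * (D b - D m) := by rw [← mul_sum, sum_Ico_sub D hmb]
  · calc ∑ s ∈ Ico m b, ds (s + 1)
        ≤ ∑ s ∈ Ico m b, 4 * Rsq * (log (D (s + 1)) - log (D s)) := sum_le_sum fun s _ => by
          rw [hDrec]
          exact le_four_mul_log_mul_sqrt_one_add_div_sub hRsq (hDpos s) (hds _).1 (hds _).2
      _ = 4 * Rsq * log (D b / D m) := by
          rw [← mul_sum, sum_Ico_sub (fun t => log (D t)) hmb,
            log_div (hDpos b).ne' (hDpos m).ne']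

/-- Multiplicative step-size recurrence bounds (Lemma from Ene–Nguyen–Vladu).
`ds t` plays the role of `d_t²` and `Rsq` the role of `R²`; `D` satisfies
`D t = D (t−1) · √(1 + ds t / Rsq)` with `D 0 > 0`. -/
theorem stmt_14 (T : ℕ) (Rsq : ℝ) (hRsq : 0 < Rsq)
    (ds : ℕ → ℝ) (hds : ∀ t, 0 ≤ ds t ∧ ds t ≤ Rsq)
    (D : ℕ → ℝ) (hD0 : 0 < D 0)
    (hDrec : ∀ t, D (t + 1) = D t * Real.sqrt (1 + ds (t + 1) / Rsq))
    (a b : ℕ) (ha : 1 ≤ a) (hab : a ≤ b) (hbT : b ≤ T) :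
    (∑ t ∈ Finset.Icc a b, D (t - 1) * ds t ≥ 2 * Rsq * (D b - D (a - 1))) ∧
    (∑ t ∈ Finset.Icc a b, D (t - 1) * ds t ≤
      (Real.sqrt 2 + 1) * Rsq * (D b - D (a - 1))) ∧
    (∑ t ∈ Finset.Icc a b, ds t ≤ 4 * Rsq * Real.log (D b / D (a - 1))) :=
  stmt_14_general Rsq hRsq ds hds D hD0 hDrec a b ha hab
end

section
/- Let a ≥ 0 and define φ : {z ∈ R^d : z_i ≥ 1 for all i} → R by φ(z) = a·sqrt(sum_{i=1}^d ln(z_i)) − sum_{i=1}^d z_i. Then max over the domain of φ is at most sqrt(d)·a·sqrt(ln a) (when a ≥ 1, so this bound is nonnegative). -/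
/-!
Write `L = log a`. Since `z = a · exp (log z - L) ≥ a (1 + log z - L)`, the sum `∑ z_i` is at least
`a (d + S - d L)` with `S = ∑ log z_i`. If `S ≤ d L` the claim is just `a √S ≤ a √(d L)`; otherwise it
reduces to the one-variable inequality `√S - √(d L) ≤ 1 + (S - d L)`.
-/

open Finset

lemma Real.mul_one_add_sub_log_le_exp {a : ℝ} (ha : 0 < a) (x : ℝ) :
    a * (1 + (x - Real.log a)) ≤ Real.exp x := by
  calc a * (1 + (x - Real.log a)) ≤ a * Real.exp (x - Real.log a) := by
        gcongr; linarith [Real.add_one_le_exp (x - Real.log a)]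
    _ = Real.exp x := by rw [Real.exp_sub, Real.exp_log ha]; field_simp

lemma Real.sqrt_sub_sqrt_le_one_add_sub {s c : ℝ} (hc : 0 ≤ c) (hcs : c ≤ s) :
    Real.sqrt s - Real.sqrt c ≤ 1 + (s - c) := by
  have hv := Real.sqrt_nonneg c
  have huv : Real.sqrt c ≤ Real.sqrt s := Real.sqrt_le_sqrt hcs
  have hc2 := Real.sq_sqrt hc
  have hs2 := Real.sq_sqrt (hc.trans hcs)
  nlinarith

lemma mul_card_add_sum_log_sub_le_sum {ι : Type*} (s : Finset ι) {a : ℝ} (ha : 0 < a)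
    {z : ι → ℝ} (hz : ∀ i ∈ s, 0 < z i) :
    a * (#s + (∑ i ∈ s, Real.log (z i) - #s * Real.log a)) ≤ ∑ i ∈ s, z i := by
  have key (i) (hi : i ∈ s) : a * (1 + (Real.log (z i) - Real.log a)) ≤ z i := by
    simpa [Real.exp_log (hz i hi)] using Real.mul_one_add_sub_log_le_exp ha (Real.log (z i))
  calc a * (#s + (∑ i ∈ s, Real.log (z i) - #s * Real.log a))
      = ∑ i ∈ s, a * (1 + (Real.log (z i) - Real.log a)) := by
        simp only [← mul_sum, sum_add_distrib, sum_sub_distrib, sum_const, nsmul_eq_mul, mul_one]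
    _ ≤ ∑ i ∈ s, z i := sum_le_sum key

theorem stmt_15_general (d : ℕ) (a : ℝ) (ha : 1 ≤ a) :
    ∀ z : Fin d → ℝ, (∀ i, 1 ≤ z i) →
      a * Real.sqrt (∑ i, Real.log (z i)) - (∑ i, z i) ≤
        Real.sqrt d * a * Real.sqrt (Real.log a) := by
  intro z hz
  set S := ∑ i, Real.log (z i)
  have hL : 0 ≤ Real.log a := Real.log_nonneg ha
  have hc : 0 ≤ d * Real.log a := by positivity
  have hz_nonneg : 0 ≤ ∑ i, z i := sum_nonneg fun i _ => zero_le_one.trans (hz i)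
  rw [show Real.sqrt d * a * Real.sqrt (Real.log a) = a * Real.sqrt (d * Real.log a) by
    rw [Real.sqrt_mul d.cast_nonneg]; ring]
  rcases le_or_gt S (d * Real.log a) with hS | hS
  · nlinarith [Real.sqrt_le_sqrt hS]
  have hd : (1 : ℝ) ≤ d := by
    obtain rfl | hd := d.eq_zero_or_pos
    · simp [S] at hS
    · exact_mod_cast hd
  have hsum := mul_card_add_sum_log_sub_le_sum univ (zero_lt_one.trans_le ha)
    (fun i _ => zero_lt_one.trans_le (hz i))
  rw [card_univ, Fintype.card_fin] at hsum
  nlinarith [Real.sqrt_sub_sqrt_le_one_add_sub hc hS.le]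

/-- For `a ≥ 1` and `z` with every coordinate at least `1`,
`a √(∑ ln z_i) − ∑ z_i ≤ √d · a · √(ln a)`. -/
theorem stmt_15 (d : ℕ) (hd : 0 < d) (a : ℝ) (ha : 1 ≤ a) :
    ∀ z : Fin d → ℝ, (∀ i, 1 ≤ z i) →
      a * Real.sqrt (∑ i, Real.log (z i)) - (∑ i, z i) ≤
        Real.sqrt d * a * Real.sqrt (Real.log a) :=
  stmt_15_general d a ha
end
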